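/- arXiv:1306.0801 — 5 statements merged into one kernel-verified Lean document; each statement's English description precedes it below -/
import Mathlib

section
/- Let (G, α) be a connected edge-labeled graph over an integral domain R, fix r ∈ R and a vertex v₀, and define the scaled labeling rα by (rα)(e) = r·α(e) for each edge e. Let M = {p ∈ R_{G,α} : p_{v₀} = 0}. Then R_{G, rα} = R·1 ⊕ rM, where rM = {r·p : p ∈ M}. -/
open Pointwise

/-- A generalized spline on the edge-labeled graph `(G, α)`. -/
def IsSpline {V R : Type*} [CommRing R] (G : SimpleGraph V) (α : Sym2 V → Ideal R)
    (p : V → R) : Prop :=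
  ∀ u v : V, G.Adj u v → p u - p v ∈ α s(u, v)

/-- Let `R` be an integral domain, `(G, α)` a connected edge-labeled graph, `r ∈ R`, and
`rα` the labeling scaling each edge ideal by `r`.  With `M` the `α`-splines vanishing at a
fixed vertex `v₀`, we have `R_{G,rα} = R·1 ⊕ rM`: a tuple `p` is a spline for `rα` if and
only if it decomposes uniquely as a constant spline plus `r` times a spline in `M`. -/
theorem spline_scaled_labeling {V R : Type*} [CommRing R] [IsDomain R]
    (G : SimpleGraph V) (hG : G.Connected) (α : Sym2 V → Ideal R) (r : R) (v₀ : V)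
    (p : V → R) :
    IsSpline G (fun e => r • α e) p ↔
      ∃! c : R × (V → R),
        (∃ q : V → R, IsSpline G α q ∧ q v₀ = 0 ∧ c.2 = fun w => r * q w) ∧
        p = fun w => c.1 + c.2 w := by
  constructor
  · intro hp
    -- every difference is divisible by r
    have key : ∀ u w : V, G.Reachable u w → ∃ a : R, p u - p w = r * a := by
      intro u w h
      obtain ⟨wk⟩ := h
      induction wk with
      | nil => exact ⟨0, by ring_nf⟩
      | @cons u v w hadj q ih =>
        obtain ⟨a, ha⟩ := ih
        have hm := hp u v hadj
        have hm' : p u - p v ∈ r • (α s(u, v) : Set R) := by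
          rw [← Submodule.coe_pointwise_smul]; exact hm
        obtain ⟨b, _, hb⟩ := Set.mem_smul_set.mp hm'
        exact ⟨b + a, by rw [smul_eq_mul] at hb; rw [mul_add, hb, ← ha]; ring⟩
    have key2 : ∀ w : V, ∃ a : R, p w - p v₀ = r * a :=
      fun w => key w v₀ (hG.preconnected w v₀)
    choose q hq using key2
    have hq0 : r * q v₀ = 0 := by rw [← hq v₀]; ring
    set q' : V → R := fun w => q w - q v₀ with hq'
    have hrq' : ∀ w, r * q' w = p w - p v₀ := by
      intro w
      have := hq w
      simp only [hq', mul_sub, ← this, hq0]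
      ring
    refine ⟨(p v₀, fun w => p w - p v₀), ⟨?_, by funext w; ring⟩, ?_⟩
    · by_cases hr : r = 0
      · refine ⟨fun _ => 0, fun u v _ => by simp, rfl, ?_⟩
        funext w
        show p w - p v₀ = r * 0
        rw [hq w, hr]; ring
      · refine ⟨q', fun u v h => ?_, by simp [hq'], by funext w; rw [hrq' w]⟩
        have hm := hp u v h
        have hm' : p u - p v ∈ r • (α s(u, v) : Set R) := by
          rw [← Submodule.coe_pointwise_smul]; exact hm
        obtain ⟨b, hb, hb2⟩ := Set.mem_smul_set.mp hm'
        have h1 : r * (q' u - q' v) = p u - p v := by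
          rw [mul_sub, hrq' u, hrq' v]; ring
        have h2 : r * (q' u - q' v) = r * b := by
          rw [h1, ← hb2, smul_eq_mul]
        rwa [mul_left_cancel₀ hr h2]
    · rintro ⟨c1, c2⟩ ⟨⟨qq, hqs, hqq0, hc2⟩, hpc⟩
      have hc2v : c2 v₀ = 0 := by simpa [hqq0] using congrFun hc2 v₀
      have hc1 : c1 = p v₀ := by simpa [hc2v] using (congrFun hpc v₀).symm
      refine Prod.ext hc1 ?_
      funext w
      have h := congrFun hpc w
      show c2 w = p w - p v₀
      rw [h, hc1]; ring
  · rintro ⟨c, ⟨⟨q, hs, h0, hc2⟩, hcp⟩, -⟩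
    intro u v h
    have : p u - p v = r * (q u - q v) := by
      rw [hcp, hc2]; ring
    rw [this, ← smul_eq_mul]
    exact Submodule.smul_mem_pointwise_smul _ _ _ (hs u v h)
end

section
/- Let C_n be a cycle with vertices v₁, …, v_n in order, edge ideals α(e_{i,i+1}) for 1 ≤ i ≤ n−1 and α(e_{1,n}). For any choices p_{v₁} ∈ R, α_{i,i+1} ∈ α(e_{i,i+1}), and α_{1,n} ∈ α(e_{1,n}), the tuple p defined by p_{v₁} = p_{v₁} and p_{v_k} = p_{v₁} + α_{1,n}·(α_{1,2} + α_{2,3} + ⋯ + α_{k−1,k}) for 2 ≤ k ≤ n is a generalized spline on C_n. -/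
open Finset

theorem add_mul_sum_Ico_succ_sub {R : Type*} [CommRing R] (c x : R) (f : ℕ → R) {m i : ℕ}
    (hmi : m ≤ i) :
    (c + x * ∑ j ∈ Ico m (i + 1), f j) - (c + x * ∑ j ∈ Ico m i, f j) = x * f i := by
  rw [sum_Ico_succ_top hmi]
  ring

/-- Generalized splines on the cycle `C_n` (vertices `v₁, …, v_n` in order, edge `v_i v_{i+1}`
labeled by the ideal `I i` for `1 ≤ i ≤ n-1`, and edge `v₁ v_n` labeled by `I1n`).
For any choices `p₁ ∈ R`, `a i ∈ I i`, and `b ∈ I1n`, the tuple defined by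
`p_k = p₁ + b·(a₁ + a₂ + ⋯ + a_{k-1})` satisfies the GKM condition at every edge of the
cycle, i.e. it is a generalized spline on `C_n`. -/
theorem spline_on_cycle {R : Type*} [CommRing R] (n : ℕ) (hn : 3 ≤ n)
    (I : ℕ → Ideal R) (I1n : Ideal R) (p1 : R)
    (a : ℕ → R) (ha : ∀ i, 1 ≤ i → i ≤ n - 1 → a i ∈ I i)
    (b : R) (hb : b ∈ I1n) (p : ℕ → R)
    (hp : ∀ k, 1 ≤ k → k ≤ n → p k = p1 + b * ∑ i ∈ Finset.Ico 1 k, a i) :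
    (∀ i, 1 ≤ i → i ≤ n - 1 → p (i + 1) - p i ∈ I i) ∧ p n - p 1 ∈ I1n := by
  refine ⟨fun i hi hin => ?_, ?_⟩
  · rw [hp (i + 1) (by omega) (by omega), hp i hi (by omega), add_mul_sum_Ico_succ_sub _ _ _ hi]
    exact I i |>.mul_mem_left b (ha i hi hin)
  · have hp1 : p 1 = p1 := by simpa using hp 1 le_rfl (by omega)
    rw [hp n (by omega) le_rfl, hp1, add_sub_cancel_left]
    exact I1n.mul_mem_right _ hb
end

section
/- Let (G, α) be a finite edge-labeled graph, G' a subgraph of G, and p a generalized spline on (G', α|_{G'}). For each edge v_i v_j of G not in G', choose a nonzero element α_{i,j} ∈ α(v_i v_j) and let N be the product of all these elements. Then the tuple q defined by q_{v_i} = N·p_{v_i} if v_i ∈ V(G') and q_{v_i} = 0 otherwise is a generalized spline on (G, α). -/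
theorem Ideal.ite_mul_mem {R : Type*} [CommRing R] {I : Ideal R} {P : Prop} [Decidable P]
    {a : R} (x : R) (ha : a ∈ I) : (if P then a * x else 0) ∈ I := by
  split_ifs
  exacts [I.mul_mem_right x ha, I.zero_mem]

theorem spline_extend_from_subgraph_general {V R : Type*} [CommRing R]
    (G : SimpleGraph V) (α : Sym2 V → Ideal R) (H : G.Subgraph)
    [DecidablePred (· ∈ H.verts)]
    (p : V → R) (hp : ∀ u v : V, H.Adj u v → p u - p v ∈ α s(u, v))
    (S : Finset (Sym2 V)) (hS : ∀ e, e ∈ S ↔ e ∈ G.edgeSet ∧ e ∉ H.edgeSet)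
    (c : Sym2 V → R) (hc : ∀ e ∈ S, c e ∈ α e ∧ c e ≠ 0) :
    IsSpline G α (fun w => if w ∈ H.verts then (∏ e ∈ S, c e) * p w else 0) := by
  intro u v huv
  by_cases hH : H.Adj u v
  · simp only [if_pos hH.fst_mem, if_pos hH.snd_mem, ← mul_sub]
    exact Ideal.mul_mem_left _ _ (hp u v hH)
  · -- on an edge outside `H` both values are multiples of `N`, and `N` has a factor in its label
    have hnew : s(u, v) ∈ S := (hS _).2 ⟨huv, hH⟩
    have hN : ∏ e ∈ S, c e ∈ α s(u, v) := Ideal.prod_mem _ hnew (hc _ hnew).1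
    exact Ideal.sub_mem _ (Ideal.ite_mul_mem _ hN) (Ideal.ite_mul_mem _ hN)

/-- Extending a spline on a subgraph to the whole graph: let `H` be a subgraph of `G`, `p`
a generalized spline on `(H, α|_H)`, and for each edge of `G` not in `H` (collected in the
finite set `S`) choose a nonzero element `c e ∈ α e`.  With `N = ∏_{e ∈ S} c e`, the tuple
equal to `N · p` on the vertices of `H` and `0` elsewhere is a generalized spline on
`(G, α)`. -/
theorem spline_extend_from_subgraph {V R : Type*} [Fintype V] [CommRing R]
    (G : SimpleGraph V) (α : Sym2 V → Ideal R) (H : G.Subgraph)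
    [DecidablePred (· ∈ H.verts)]
    (p : V → R) (hp : ∀ u v : V, H.Adj u v → p u - p v ∈ α s(u, v))
    (S : Finset (Sym2 V)) (hS : ∀ e, e ∈ S ↔ e ∈ G.edgeSet ∧ e ∉ H.edgeSet)
    (c : Sym2 V → R) (hc : ∀ e ∈ S, c e ∈ α e ∧ c e ≠ 0) :
    IsSpline G α (fun w => if w ∈ H.verts then (∏ e ∈ S, c e) * p w else 0) :=
  spline_extend_from_subgraph_general G α H p hp S hS c hc
end

section
/- Let R be an integral domain and (G, α) a connected edge-labeled graph on n vertices such that every edge ideal α(e) contains a nonzero element. Then the R-module R_G of generalized splines contains a free R-submodule of rank n. -/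
/-- Let `R` be an integral domain and `(G, α)` a connected edge-labeled graph on
`n = Fintype.card V` vertices whose edge ideals are all nonzero.  Then `R_G` contains a
free `R`-submodule of rank `n`: there are `n` linearly independent generalized splines. -/
theorem spline_free_submodule_rank_card {V R : Type*} [Fintype V] [CommRing R] [IsDomain R]
    (G : SimpleGraph V) (hG : G.Connected) (α : Sym2 V → Ideal R)
    (hα : ∀ u v : V, G.Adj u v → α s(u, v) ≠ ⊥) :
    ∃ q : Fin (Fintype.card V) → V → R,
      (∀ i, IsSpline G α (q i)) ∧ LinearIndependent R q := by
  classical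
  -- choose a nonzero element of each edge ideal
  have hchoice : ∀ ed : Sym2 V, ∃ x : R, ed ∈ G.edgeSet → (x ∈ α ed ∧ x ≠ 0) := by
    intro ed
    by_cases h : ed ∈ G.edgeSet
    · induction ed using Sym2.ind with
      | _ u v =>
        obtain ⟨x, hx, hx0⟩ := Submodule.exists_mem_ne_zero_of_ne_bot (hα u v h)
        exact ⟨x, fun _ => ⟨hx, hx0⟩⟩
    · exact ⟨1, fun h' => absurd h' h⟩
  choose a ha using hchoice
  set S : Finset (Sym2 V) := (G.edgeSet.toFinite).toFinset with hS
  set c : R := ∏ ed ∈ S, a ed with hc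
  have hc0 : c ≠ 0 := by
    rw [hc]
    exact Finset.prod_ne_zero_iff.mpr fun ed hed =>
      (ha ed ((Set.Finite.mem_toFinset _).mp hed)).2
  have hcmem : ∀ u v : V, G.Adj u v → c ∈ α s(u, v) := by
    intro u v huv
    have hedge : s(u, v) ∈ G.edgeSet := G.mem_edgeSet.mpr huv
    have hmem : s(u, v) ∈ S := (Set.Finite.mem_toFinset _).mpr hedge
    obtain ⟨k, hk⟩ := Finset.dvd_prod_of_mem a hmem
    rw [hc, hk]
    exact Ideal.mul_mem_right _ _ (ha _ hedge).1
  set ε : Fin (Fintype.card V) ≃ V := (Fintype.equivFin V).symm with hε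
  refine ⟨fun i v => if i ≤ ε.symm v then c else 0, ?_, ?_⟩
  · intro i u v huv
    show (if i ≤ ε.symm u then c else 0) - (if i ≤ ε.symm v then c else 0) ∈ α s(u, v)
    by_cases h1 : i ≤ ε.symm u <;> by_cases h2 : i ≤ ε.symm v
    · rw [if_pos h1, if_pos h2, sub_self]; exact (α s(u, v)).zero_mem
    · rw [if_pos h1, if_neg h2, sub_zero]; exact hcmem u v huv
    · rw [if_neg h1, if_pos h2, zero_sub]; exact (α s(u, v)).neg_mem (hcmem u v huv)
    · rw [if_neg h1, if_neg h2, sub_self]; exact (α s(u, v)).zero_mem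
  · rw [Fintype.linearIndependent_iff]
    intro g hg
    have key : ∀ n : ℕ, ∀ j : Fin (Fintype.card V), (j : ℕ) < n → g j = 0 := by
      intro n
      induction n with
      | zero => intro j h; omega
      | succ n ih =>
        intro j hj
        by_cases hjn : (j : ℕ) < n
        · exact ih j hjn
        · have ih' : ∀ i : Fin (Fintype.card V), i < j → g i = 0 := by
            intro i hij
            exact ih i (by omega)
          have := congrFun hg (ε j)
          simp only [Finset.sum_apply, Pi.smul_apply, smul_eq_mul, Equiv.symm_apply_apply,
            Pi.zero_apply, mul_ite, mul_zero] at this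
          have hsum : (∑ i, if i ≤ j then g i * c else 0) = g j * c := by
            rw [Finset.sum_congr rfl (fun i _ => ?_)]
            · exact (Finset.sum_ite_eq' Finset.univ j (fun i => g i * c)).trans (by simp)
            · show (if i ≤ j then g i * c else 0) = if i = j then g i * c else 0
              by_cases hij : i = j
              · simp [hij]
              · rcases lt_or_ge j i with h | h
                · rw [if_neg (not_le.mpr h), if_neg hij]
                · rw [if_pos h, if_neg hij, ih' i (lt_of_le_of_ne h hij), zero_mul]
          rw [hsum] at this
          exact (mul_eq_zero.mp this).resolve_right hc0
    exact fun j => key (Fintype.card V) j j.isLt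
end

section
/- Let R be an integral domain and (G, α) an edge-labeled graph (with each edge ideal containing a nonzero element) which contains a subgraph whose vertex set is a proper subset of V(G). Then R_G contains a nontrivial generalized spline, i.e., a spline not of the form r·1 for any r ∈ R. -/
/-- Let `R` be an integral domain and `(G, α)` a finite edge-labeled graph with nonzero
edge ideals which has at least two vertices (so that it contains a subgraph whose vertex
set is a proper subset of `V`).  Then `R_G` contains a nontrivial generalized spline,
i.e. a spline that is not a constant multiple `r·1` of the unit spline. -/
theorem exists_nontrivial_spline {V R : Type*} [Fintype V] [CommRing R] [IsDomain R]
    (G : SimpleGraph V) (α : Sym2 V → Ideal R)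
    (hα : ∀ u v : V, G.Adj u v → α s(u, v) ≠ ⊥)
    (hV : 1 < Fintype.card V) :
    ∃ p : V → R, IsSpline G α p ∧ ∀ r : R, p ≠ fun _ => r := by
  classical
  -- choose a nonzero element of each edge ideal
  have hch : ∀ e ∈ G.edgeFinset, ∃ a : R, a ∈ α e ∧ a ≠ 0 := by
    intro e he
    induction e using Sym2.ind with
    | _ u v =>
      have hadj : G.Adj u v := by
        rwa [SimpleGraph.mem_edgeFinset, SimpleGraph.mem_edgeSet] at he
      have := hα u v hadj
      rcases Submodule.exists_mem_ne_zero_of_ne_bot this with ⟨a, ha, ha0⟩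
      exact ⟨a, ha, ha0⟩
  choose f hf hf0 using hch
  set x : R := ∏ e ∈ G.edgeFinset.attach, f e.1 e.2 with hx
  have hx0 : x ≠ 0 := Finset.prod_ne_zero_iff.2 fun e _ => hf0 e.1 e.2
  have hxmem : ∀ u v : V, G.Adj u v → x ∈ α s(u, v) := by
    intro u v hadj
    have he : s(u, v) ∈ G.edgeFinset := by
      rw [SimpleGraph.mem_edgeFinset, SimpleGraph.mem_edgeSet]; exact hadj
    have hdvd : f s(u, v) he ∣ x :=
      Finset.dvd_prod_of_mem _ (Finset.mem_attach _ ⟨s(u, v), he⟩)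
    rcases hdvd with ⟨b, hb⟩
    rw [hb]
    exact Ideal.mul_mem_right _ _ (hf _ he)
  -- pick two distinct vertices
  obtain ⟨v₀⟩ : Nonempty V := Fintype.card_pos_iff.1 (by omega)
  obtain ⟨w, hw⟩ := Fintype.exists_ne_of_one_lt_card hV v₀
  refine ⟨fun u => if u = v₀ then x else 0, ?_, ?_⟩
  · intro u v hadj
    by_cases hu : u = v₀
    · by_cases hv : v = v₀
      · exact absurd (hu.trans hv.symm) hadj.ne
      · simp only [if_pos hu, if_neg hv, sub_zero]
        exact hxmem u v hadj
    · by_cases hv : v = v₀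
      · simp only [if_neg hu, if_pos hv, zero_sub]
        exact (α s(u, v)).neg_mem (hxmem u v hadj)
      · simp only [if_neg hu, if_neg hv, sub_zero]
        exact (α s(u, v)).zero_mem
  · intro r h
    have h1 : x = r := by simpa using congrFun h v₀
    have h2 : (0 : R) = r := by simpa [hw] using congrFun h w
    exact hx0 (h1.trans h2.symm)
end
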